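/- Let a : [0,ℓ] → ℝ be Lipschitz with a(x) ≥ 0 for all x, and suppose ∫₀^ℓ a(t)√(1+a'(t)²) dt ≤ S0. Then for all 0 ≤ x < y ≤ ℓ one has |a(y)² − a(x)²| ≤ 2 S0. -/

import Mathlib

open MeasureTheory Set Filter Topology

noncomputable section


/-- Along the sequence `x + 1/(n+1)`, difference quotients converge to the derivative. -/
lemma tendsto_slope_seq {f : ℝ → ℝ} {x L : ℝ} (hf : HasDerivAt f L x) :
    Tendsto (fun n : ℕ => (f (x + 1 / ((n : ℝ) + 1)) - f x) * ((n : ℝ) + 1)) atTop (𝓝 L) := by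
  have h0 : Tendsto (fun n : ℕ => x + 1 / ((n : ℝ) + 1)) atTop (𝓝[≠] x) := by
    apply tendsto_nhdsWithin_of_tendsto_nhds_of_eventually_within
    · have : Tendsto (fun n : ℕ => 1 / ((n : ℝ) + 1)) atTop (𝓝 0) := tendsto_one_div_add_atTop_nhds_zero_nat
      have h := this.const_add x
      simpa using h
    · filter_upwards with n
      have hpos : (0:ℝ) < 1 / ((n:ℝ) + 1) := by positivity
      simp only [mem_compl_iff, mem_singleton_iff]
      intro h
      nlinarith [hpos]
  have hs := (hasDerivAt_iff_tendsto_slope.mp hf).comp h0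
  convert hs using 2 with n
  have hpos : (0:ℝ) < 1 / ((n:ℝ) + 1) := by positivity
  simp only [Function.comp_apply, slope_def_field]
  have : x + 1 / ((n:ℝ) + 1) - x = 1 / ((n:ℝ) + 1) := by ring
  rw [this, div_div_eq_mul_div]
  simp

/-- Fundamental theorem of calculus for (globally) Lipschitz functions `ℝ → ℝ`,
with the almost-everywhere defined derivative `deriv f`. -/
lemma lipschitz_ftc {K : NNReal} {f : ℝ → ℝ} (hf : LipschitzWith K f) {c d : ℝ} (hcd : c ≤ d) :
    ∫ t in Set.Ioc c d, deriv f t = f d - f c := by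
  have hcont : Continuous f := hf.continuous
  set g : ℕ → ℝ → ℝ := fun n x => (f (x + 1 / ((n : ℝ) + 1)) - f x) * ((n : ℝ) + 1) with hg
  set F : ℝ → ℝ := fun u => ∫ t in c..u, f t with hF
  -- dominated convergence
  have h1 : Tendsto (fun n => ∫ x in Ioc c d, g n x) atTop (𝓝 (∫ x in Ioc c d, deriv f x)) := by
    apply tendsto_integral_of_dominated_convergence (fun _ => (K : ℝ))
    · intro n
      exact (((hcont.comp (continuous_id.add continuous_const)).sub hcont).mul
        continuous_const).aestronglyMeasurable
    · exact integrableOn_const measure_Ioc_lt_top.ne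
    · intro n
      filter_upwards with x
      have hd : |f (x + 1 / ((n : ℝ) + 1)) - f x| ≤ (K : ℝ) * (1 / ((n : ℝ) + 1)) := by
        have h := hf.dist_le_mul (x + 1 / ((n : ℝ) + 1)) x
        have : dist (x + 1 / ((n : ℝ) + 1)) x = 1 / ((n : ℝ) + 1) := by
          rw [Real.dist_eq]
          rw [show x + 1 / ((n : ℝ) + 1) - x = 1 / ((n : ℝ) + 1) by ring]
          exact abs_of_pos (by positivity)
        rw [this] at h
        simpa [Real.dist_eq] using h
      calc ‖g n x‖ = |f (x + 1 / ((n : ℝ) + 1)) - f x| * ((n : ℝ) + 1) := by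
            rw [hg, Real.norm_eq_abs, abs_mul, abs_of_pos (by positivity : (0:ℝ) < (n : ℝ) + 1)]
        _ ≤ ((K : ℝ) * (1 / ((n : ℝ) + 1))) * ((n : ℝ) + 1) := by
            have : (0:ℝ) ≤ (n : ℝ) + 1 := by positivity
            exact mul_le_mul_of_nonneg_right hd this
        _ = (K : ℝ) := by field_simp
    · filter_upwards [ae_restrict_of_ae (hf.ae_differentiableAt (μ := volume))] with x hx
      exact tendsto_slope_seq hx.hasDerivAt
  -- explicit computation of the integrals of the difference quotients
  have key : ∀ n : ℕ, ∫ x in Ioc c d, g n x =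
      (F (d + 1 / ((n : ℝ) + 1)) - F d) * ((n : ℝ) + 1)
        - (F (c + 1 / ((n : ℝ) + 1)) - F c) * ((n : ℝ) + 1) := by
    intro n
    set h : ℝ := 1 / ((n : ℝ) + 1) with hh
    have i1 : IntervalIntegrable (fun x => f (x + h)) volume c d :=
      (hcont.comp (continuous_id.add continuous_const)).intervalIntegrable c d
    have i2 : IntervalIntegrable f volume c d := hcont.intervalIntegrable c d
    have e1 : ∫ x in Ioc c d, g n x = ∫ x in c..d, g n x :=
      (intervalIntegral.integral_of_le hcd).symm
    rw [e1]
    have e2 : ∫ x in c..d, g n x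
        = ((∫ x in c..d, f (x + h)) - ∫ x in c..d, f x) * ((n : ℝ) + 1) := by
      rw [← intervalIntegral.integral_sub i1 i2, ← intervalIntegral.integral_mul_const]
    rw [e2]
    have e3 : (∫ x in c..d, f (x + h)) = ∫ x in (c + h)..(d + h), f x :=
      intervalIntegral.integral_comp_add_right f h
    have e4 : ∫ x in (c + h)..(d + h), f x = F (d + h) - F (c + h) :=
      (intervalIntegral.integral_interval_sub_left
        (hcont.intervalIntegrable c (d + h)) (hcont.intervalIntegrable c (c + h))).symm
    have e5 : F c = 0 := intervalIntegral.integral_same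
    rw [e3, e4]
    have : (∫ x in c..d, f x) = F d := rfl
    rw [this, e5]
    ring
  have hFder : ∀ u : ℝ, HasDerivAt F (f u) u := by
    intro u
    exact intervalIntegral.integral_hasDerivAt_right (hcont.intervalIntegrable c u)
      hcont.stronglyMeasurable.stronglyMeasurableAtFilter hcont.continuousAt
  have h2 : Tendsto (fun n => ∫ x in Ioc c d, g n x) atTop (𝓝 (f d - f c)) := by
    simp only [key]
    exact (tendsto_slope_seq (hFder d)).sub (tendsto_slope_seq (hFder c))
  exact tendsto_nhds_unique h1 h2

/-- If the lateral surface integral of a nonnegative Lipschitz radius `a` is at most `S0`,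
then `|a(y)² − a(x)²| ≤ 2 S0` for all `0 ≤ x < y ≤ ℓ`. -/
theorem surface_bound_square_oscillation
    (ℓ S0 : ℝ) (hℓ : 0 < ℓ) (hS0 : 0 < S0)
    (a : ℝ → ℝ) (halip : ∃ K : NNReal, LipschitzOnWith K a (Set.Icc 0 ℓ))
    (hapos : ∀ x ∈ Set.Icc 0 ℓ, 0 ≤ a x)
    (hsurf : (∫ t in (0:ℝ)..ℓ, a t * Real.sqrt (1 + (deriv a t) ^ 2)) ≤ S0) :
    ∀ x y : ℝ, 0 ≤ x → x < y → y ≤ ℓ → |(a y) ^ 2 - (a x) ^ 2| ≤ 2 * S0 := by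
  obtain ⟨K, hK⟩ := halip
  obtain ⟨b, hb, hab⟩ := hK.extend_real
  intro x y hx hxy hy
  have hxmem : x ∈ Icc (0:ℝ) ℓ := ⟨hx, (hxy.le.trans hy)⟩
  have hymem : y ∈ Icc (0:ℝ) ℓ := ⟨hx.trans hxy.le, hy⟩
  have h0mem : (0:ℝ) ∈ Icc (0:ℝ) ℓ := ⟨le_refl _, hℓ.le⟩
  set M : ℝ := a 0 + K * ℓ with hM
  have hM0 : 0 ≤ M := add_nonneg (hapos 0 h0mem) (by positivity)
  have haM : ∀ z ∈ Icc (0:ℝ) ℓ, a z ≤ M := by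
    intro z hz
    have h := hK.dist_le_mul z hz 0 h0mem
    rw [Real.dist_eq, Real.dist_eq, sub_zero] at h
    have h2 : a z - a 0 ≤ (K:ℝ) * |z| := (abs_le.mp h).2
    have h3 : |z| ≤ ℓ := by rw [abs_of_nonneg hz.1]; exact hz.2
    nlinarith [NNReal.coe_nonneg K]
  set c : ℝ → ℝ := fun z => max (min (b z) M) 0 with hcdef
  have hc : LipschitzWith K c := (hb.min_const M).max_const 0
  have hceq : ∀ z ∈ Icc (0:ℝ) ℓ, a z = c z := by
    intro z hz
    have h1 : b z = a z := (hab hz).symm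
    simp only [hcdef, h1]
    rw [min_eq_left (haM z hz), max_eq_left (hapos z hz)]
  have hc0 : ∀ z, 0 ≤ c z := fun z => le_max_right _ _
  have hcM : ∀ z, c z ≤ M := fun z => max_le ((min_le_right _ _)) hM0
  set q : ℝ → ℝ := fun z => (c z) ^ 2 with hqdef
  set L : NNReal := Real.toNNReal (2 * M * K) with hL
  have hLcoe : (L : ℝ) = 2 * M * K := Real.coe_toNNReal _ (by positivity)
  have hq : LipschitzWith L q := by
    apply LipschitzWith.of_dist_le_mul
    intro u v
    rw [Real.dist_eq, Real.dist_eq, hLcoe]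
    have h1 : |c u - c v| ≤ (K:ℝ) * |u - v| := by
      have := hc.dist_le_mul u v
      rwa [Real.dist_eq, Real.dist_eq] at this
    have h2 : q u - q v = (c u - c v) * (c u + c v) := by simp only [hqdef]; ring
    rw [h2, abs_mul]
    have h3 : |c u + c v| ≤ 2 * M := by
      rw [abs_of_nonneg (add_nonneg (hc0 u) (hc0 v))]
      linarith [hcM u, hcM v]
    calc |c u - c v| * |c u + c v| ≤ ((K:ℝ) * |u - v|) * (2 * M) :=
          mul_le_mul h1 h3 (abs_nonneg _) (by positivity)
      _ = 2 * M * (K:ℝ) * |u - v| := by ring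
  -- FTC for q on [x, y]
  have hftc : ∫ t in Ioc x y, deriv q t = a y ^ 2 - a x ^ 2 := by
    rw [lipschitz_ftc hq hxy.le]
    show c y ^ 2 - c x ^ 2 = a y ^ 2 - a x ^ 2
    rw [← hceq x hxmem, ← hceq y hymem]
  set ψ : ℝ → ℝ := fun t => a t * Real.sqrt (1 + (deriv a t) ^ 2) with hψdef
  -- a.e. equality/bounds on interior points
  have h_ne : ∀ (p : ℝ), ∀ᵐ t : ℝ, t ≠ p := by
    intro p
    rw [ae_iff]
    simp only [not_not, Set.setOf_eq_eq_singleton]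
    exact Real.volume_singleton
  have hinterior : ∀ t ∈ Ioo (0:ℝ) ℓ, deriv a t = deriv c t := by
    intro t ht
    have hmem : Ioo (0:ℝ) ℓ ∈ 𝓝 t := isOpen_Ioo.mem_nhds ht
    have heq : a =ᶠ[𝓝 t] c :=
      Filter.eventuallyEq_of_mem hmem (fun z hz => hceq z (Ioo_subset_Icc_self hz))
    exact heq.deriv_eq
  -- pointwise a.e. bound of deriv q by 2ψ on Ioc x y
  have hae_bound : ∀ᵐ t ∂(volume.restrict (Ioc x y)), |deriv q t| ≤ 2 * ψ t := by
    filter_upwards [ae_restrict_mem measurableSet_Ioc,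
      ae_restrict_of_ae (hc.ae_differentiableAt (μ := volume)),
      ae_restrict_of_ae (h_ne y)] with t htmem hdiff htne
    have htIoo : t ∈ Ioo (0:ℝ) ℓ :=
      ⟨lt_of_le_of_lt hx htmem.1, lt_of_lt_of_le (lt_of_le_of_ne htmem.2 htne) hy⟩
    have hteq : deriv a t = deriv c t := hinterior t htIoo
    have htIcc : t ∈ Icc (0:ℝ) ℓ := Ioo_subset_Icc_self htIoo
    have hq_deriv : deriv q t = 2 * c t * deriv c t := by
      have h := (hdiff.hasDerivAt.pow 2).deriv
      simp only [hqdef]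
      rw [show (fun z => c z ^ 2) = c ^ 2 from rfl, h]
      norm_num
    have h2 : |deriv c t| ≤ Real.sqrt (1 + (deriv a t) ^ 2) := by
      rw [← hteq, ← Real.sqrt_sq_eq_abs]
      exact Real.sqrt_le_sqrt (by nlinarith)
    have h3 : c t = a t := (hceq t htIcc).symm
    show |deriv q t| ≤ 2 * (a t * Real.sqrt (1 + deriv a t ^ 2))
    rw [hq_deriv]
    have h1 : |2 * c t * deriv c t| = 2 * c t * |deriv c t| := by
      rw [abs_mul, abs_of_nonneg (by positivity : (0:ℝ) ≤ 2 * c t)]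
    rw [h1, h3]
    have := mul_le_mul_of_nonneg_left h2 (hapos t htIcc)
    linarith
  -- integrability facts
  have hψmeas : AEStronglyMeasurable ψ (volume.restrict (Ioc 0 ℓ)) := by
    have ha_m : AEStronglyMeasurable a (volume.restrict (Ioc 0 ℓ)) :=
      (hK.continuousOn.mono Ioc_subset_Icc_self).aestronglyMeasurable measurableSet_Ioc
    have hs_m : Measurable (fun t => Real.sqrt (1 + (deriv a t) ^ 2)) :=
      (measurable_const.add ((measurable_deriv a).pow_const 2)).sqrt
    exact ha_m.mul hs_m.aestronglyMeasurable.restrict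
  have hψbound : ∀ᵐ t ∂(volume.restrict (Ioc 0 ℓ)), ‖ψ t‖ ≤ M * Real.sqrt (1 + (K:ℝ) ^ 2) := by
    filter_upwards [ae_restrict_mem measurableSet_Ioc, ae_restrict_of_ae (h_ne ℓ)] with t htmem htne
    have htIoo : t ∈ Ioo (0:ℝ) ℓ := ⟨htmem.1, lt_of_le_of_ne htmem.2 htne⟩
    have htIcc : t ∈ Icc (0:ℝ) ℓ := Ioo_subset_Icc_self htIoo
    have hteq : deriv a t = deriv c t := hinterior t htIoo
    have hder_le : |deriv a t| ≤ (K:ℝ) := by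
      rw [hteq]
      simpa [Real.norm_eq_abs] using norm_deriv_le_of_lipschitz hc (x₀ := t)
    have h0 : 0 ≤ ψ t := mul_nonneg (hapos t htIcc) (Real.sqrt_nonneg _)
    rw [Real.norm_eq_abs, abs_of_nonneg h0, hψdef]
    have hsq : Real.sqrt (1 + (deriv a t) ^ 2) ≤ Real.sqrt (1 + (K:ℝ) ^ 2) := by
      apply Real.sqrt_le_sqrt
      nlinarith [hder_le, abs_nonneg (deriv a t), sq_abs (deriv a t)]
    exact mul_le_mul (haM t htIcc) hsq (Real.sqrt_nonneg _) hM0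
  have hψint : IntegrableOn ψ (Ioc 0 ℓ) :=
    Integrable.mono' (integrableOn_const measure_Ioc_lt_top.ne) hψmeas hψbound
  have hψint_xy : IntegrableOn ψ (Ioc x y) := hψint.mono_set (Ioc_subset_Ioc hx hy)
  have hqint : IntegrableOn (deriv q) (Ioc x y) := by
    apply Integrable.mono'
      (integrableOn_const measure_Ioc_lt_top.ne :
        IntegrableOn (fun _ => (L:ℝ)) (Ioc x y) volume)
      ((measurable_deriv q).aestronglyMeasurable.restrict)
    filter_upwards with t
    exact norm_deriv_le_of_lipschitz hq (x₀ := t)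
  -- final chain
  have step1 : |a y ^ 2 - a x ^ 2| ≤ ∫ t in Ioc x y, 2 * ψ t := by
    rw [← hftc]
    calc |∫ t in Ioc x y, deriv q t| ≤ ∫ t in Ioc x y, |deriv q t| := by
          simpa [Real.norm_eq_abs] using
            norm_integral_le_integral_norm (μ := volume.restrict (Ioc x y)) (deriv q)
      _ ≤ ∫ t in Ioc x y, 2 * ψ t :=
          integral_mono_ae hqint.abs (hψint_xy.const_mul 2) hae_bound
  have step2 : ∫ t in Ioc x y, 2 * ψ t ≤ ∫ t in Ioc 0 ℓ, 2 * ψ t := by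
    apply setIntegral_mono_set (hψint.const_mul 2)
    · filter_upwards [ae_restrict_mem measurableSet_Ioc] with t htmem
      have : t ∈ Icc (0:ℝ) ℓ := Ioc_subset_Icc_self htmem
      have := mul_nonneg (hapos t this) (Real.sqrt_nonneg (1 + (deriv a t) ^ 2))
      positivity
    · exact HasSubset.Subset.eventuallyLE (Ioc_subset_Ioc hx hy)
  have step3 : ∫ t in Ioc 0 ℓ, 2 * ψ t = 2 * ∫ t in Ioc 0 ℓ, ψ t :=
    integral_const_mul 2 ψ
  have step4 : ∫ t in Ioc 0 ℓ, ψ t ≤ S0 := by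
    rwa [intervalIntegral.integral_of_le hℓ.le] at hsurf
  linarith
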